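/- Let n be a natural number and a, b, c, d real numbers such that all Pochhammer symbols (c)_k, (d)_k, (c+d−a−b)_k are nonzero for 0 ≤ k ≤ n. Then ∑_{k=0}^n [(−n)_k (a)_k (b)_k]/[(c)_k (d)_k k!] = [(c+d−a−b)_n]/[(c)_n] · ∑_{k=0}^n [(−n)_k (d−a)_k (d−b)_k]/[(d)_k (c+d−a−b)_k k!]. -/

import Mathlib

/-!
Clearing denominators, `(c)_n (d)_n ₃F₂(-n, a, b; c, d; 1)` becomes the polynomial
`clearedSum n a b c d`. Expanding `(a)_k = (d - (d - a))_k` by Chu–Vandermonde and interchanging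
the two summations, the inner sum is again a Chu–Vandermonde sum, and
`clearedSum n a b c d = ∑ⱼ C(n, j) (b)_j (d - a)_j (d + j)_{n-j} (c - b)_{n-j}`.
The right-hand side is invariant under `(a, b, c) ↦ (d - b, d - a, c + d - a - b)`.
-/

/-- The Pochhammer symbol `(a)_k = a (a+1) ⋯ (a+k-1)` over ℝ. -/
noncomputable def poch (a : ℝ) (k : ℕ) : ℝ := (ascPochhammer ℝ k).eval a

open Finset Polynomial

lemma descPochhammer_eval_add {R : Type*} [CommRing R] (x y : R) (m : ℕ) :
    (descPochhammer R m).eval (x + y) = ∑ i ∈ range (m + 1),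
      m.choose i * ((descPochhammer R i).eval x * (descPochhammer R (m - i)).eval y) := by
  have h := Ring.descPochhammer_smeval_add m (Commute.all x y)
  simp only [← aeval_eq_smeval, ← eval_map_algebraMap, descPochhammer_map] at h
  rw [h, Nat.sum_antidiagonal_eq_sum_range_succ
    (fun i j => (m.choose i : R) * ((descPochhammer R i).eval x * (descPochhammer R j).eval y))]

lemma choose_add_mul_choose (n j m : ℕ) :
    n.choose (j + m) * (j + m).choose j = n.choose j * (n - j).choose m := by
  simpa using Nat.choose_mul (n := n) (Nat.le_add_right j m)

lemma poch_add (x : ℝ) (i j : ℕ) : poch x (i + j) = poch x i * poch (x + i) j := by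
  simpa [poch, eval_comp] using congrArg (eval x) (ascPochhammer_mul ℝ i j).symm

lemma poch_mul_poch_add_sub (x : ℝ) {k n : ℕ} (h : k ≤ n) :
    poch x k * poch (x + k) (n - k) = poch x n := by
  rw [← poch_add, Nat.add_sub_cancel' h]

lemma poch_neg (x : ℝ) (k : ℕ) : poch (-x) k = (-1) ^ k * (descPochhammer ℝ k).eval x :=
  ascPochhammer_eval_neg_eq_descPochhammer ℝ x k

lemma poch_neg_natCast (n k : ℕ) : poch (-n) k = (-1) ^ k * n.choose k * k.factorial := by
  rw [poch_neg, descPochhammer_eval_eq_descFactorial, Nat.descFactorial_eq_factorial_mul_choose]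
  push_cast
  ring

lemma poch_eq_descPochhammer (x : ℝ) (k : ℕ) :
    poch x k = (descPochhammer ℝ k).eval (x + k - 1) := by
  rw [descPochhammer_eval_eq_ascPochhammer, poch]
  congr 1
  ring

/-- Chu–Vandermonde: `₂F₁(-m, x; y; 1) = (y - x)_m / (y)_m`, with the denominator cleared. -/
lemma poch_sub_eq_sum (x y : ℝ) (m : ℕ) :
    poch (y - x) m = ∑ i ∈ range (m + 1),
      (-1) ^ i * m.choose i * poch x i * poch (y + i) (m - i) := by
  rw [poch_eq_descPochhammer, show y - x + m - 1 = -x + (y + m - 1) by ring,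
    descPochhammer_eval_add]
  refine sum_congr rfl fun i hi => ?_
  have hi : i ≤ m := Nat.lt_succ_iff.mp (mem_range.mp hi)
  rw [poch_eq_descPochhammer (y + i), Nat.cast_sub hi, ← neg_neg x, poch_neg (-x), neg_neg,
    show y + i + (m - i) - 1 = y + m - 1 by ring]
  have hsign : (-1 : ℝ) ^ i * (-1) ^ i = 1 := by rw [← mul_pow]; simp
  linear_combination -(m.choose i : ℝ) * (descPochhammer ℝ i).eval (-x) *
    (descPochhammer ℝ (m - i)).eval (y + m - 1) * hsign

noncomputable def clearedSum (n : ℕ) (a b c d : ℝ) : ℝ :=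
  ∑ k ∈ range (n + 1), (-1) ^ k * n.choose k * poch a k * poch b k *
    poch (c + k) (n - k) * poch (d + k) (n - k)

lemma clearedSum_swap (n : ℕ) (a b c d : ℝ) : clearedSum n a b c d = clearedSum n b a d c :=
  sum_congr rfl fun _ _ => by ring

lemma sum_mul_poch_eq_clearedSum (n : ℕ) (a b c d : ℝ)
    (hc : ∀ k ≤ n, poch c k ≠ 0) (hd : ∀ k ≤ n, poch d k ≠ 0) :
    (∑ k ∈ range (n + 1), poch (-n) k * poch a k * poch b k /
      (poch c k * poch d k * k.factorial)) * (poch c n * poch d n) = clearedSum n a b c d := by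
  rw [clearedSum, sum_mul]
  refine sum_congr rfl fun k hk => ?_
  have hk : k ≤ n := Nat.lt_succ_iff.mp (mem_range.mp hk)
  rw [poch_neg_natCast, ← poch_mul_poch_add_sub c hk, ← poch_mul_poch_add_sub d hk]
  field_simp [hc k hk, hd k hk]

lemma clearedSum_eq_sum (n : ℕ) (a b c d : ℝ) :
    clearedSum n a b c d = ∑ j ∈ range (n + 1),
      n.choose j * poch b j * poch (d - a) j * poch (d + j) (n - j) * poch (c - b) (n - j) := by
  set f : ℕ → ℕ → ℝ := fun j m => (-1) ^ (j + m) * n.choose (j + m) * poch b (j + m) *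
    poch (c + j + m) (n - (j + m)) * poch (d + j + m) (n - (j + m)) *
    ((-1) ^ j * (j + m).choose j * poch (d - a) j * poch (d + j) m) with hf
  have expand : clearedSum n a b c d = ∑ k ∈ range (n + 1), ∑ j ∈ range (k + 1), f j (k - j) := by
    refine sum_congr rfl fun k _ => ?_
    have ha := poch_sub_eq_sum (d - a) d k
    rw [sub_sub_cancel] at ha
    simp only [ha, mul_sum, sum_mul]
    refine sum_congr rfl fun j hj => ?_
    obtain ⟨m, rfl⟩ := Nat.exists_eq_add_of_le (Nat.lt_succ_iff.mp (mem_range.mp hj))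
    simp only [hf, Nat.add_sub_cancel_left, Nat.cast_add, ← add_assoc]
    ring
  have inner : ∀ j ≤ n, ∑ m ∈ range (n + 1 - j), f j m =
      n.choose j * poch b j * poch (d - a) j * poch (d + j) (n - j) * poch (c - b) (n - j) := by
    intro j hj
    have hcv := poch_sub_eq_sum (b + j) (c + j) (n - j)
    rw [add_sub_add_right_eq_sub] at hcv
    rw [Nat.sub_add_comm hj, hcv, mul_sum]
    refine sum_congr rfl fun m hm => ?_
    have hm : m ≤ n - j := Nat.lt_succ_iff.mp (mem_range.mp hm)
    have hbin : (n.choose (j + m) * (j + m).choose j : ℝ) = n.choose j * (n - j).choose m := by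
      exact_mod_cast choose_add_mul_choose n j m
    have hsign : (-1 : ℝ) ^ (j + m) * (-1) ^ j = (-1) ^ m := by
      rw [pow_add, mul_right_comm, ← mul_pow]; simp
    simp only [hf]
    rw [poch_add b, Nat.sub_sub, ← poch_mul_poch_add_sub (d + j) hm, Nat.sub_sub]
    linear_combination (poch b j * poch (b + j) m * poch (c + j + m) (n - (j + m)) *
      poch (d - a) j * poch (d + j) m * poch (d + j + m) (n - (j + m))) *
      (n.choose (j + m) * (j + m).choose j * hsign + (-1) ^ m * hbin)
  rw [expand, sum_range_diag_flip]
  exact sum_congr rfl fun j hj => inner j (Nat.lt_succ_iff.mp (mem_range.mp hj))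

lemma clearedSum_thomae (n : ℕ) (a b c d : ℝ) :
    clearedSum n a b c d = clearedSum n (d - a) (d - b) d (c + d - a - b) := by
  rw [clearedSum_swap n (d - a), clearedSum_eq_sum, clearedSum_eq_sum]
  refine sum_congr rfl fun j _ => ?_
  rw [sub_sub_cancel, show c + d - a - b - (d - a) = c - b by ring]
  ring

theorem thomae_A3 (n : ℕ) (a b c d : ℝ)
    (hc : ∀ k ≤ n, poch c k ≠ 0) (hd : ∀ k ≤ n, poch d k ≠ 0)
    (h1 : ∀ k ≤ n, poch (c + d - a - b) k ≠ 0) :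
    ∑ k ∈ Finset.range (n + 1),
        (poch (-(n : ℝ)) k * poch a k * poch b k) /
          (poch c k * poch d k * (k.factorial : ℝ)) =
      poch (c + d - a - b) n / poch c n *
        ∑ k ∈ Finset.range (n + 1),
          (poch (-(n : ℝ)) k * poch (d - a) k * poch (d - b) k) /
            (poch d k * poch (c + d - a - b) k * (k.factorial : ℝ)) := by
  have h := sum_mul_poch_eq_clearedSum n a b c d hc hd
  rw [clearedSum_thomae, ← sum_mul_poch_eq_clearedSum n _ _ _ _ hd h1] at h
  rw [div_mul_eq_mul_div, eq_div_iff (hc n le_rfl)]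
  refine mul_right_cancel₀ (hd n le_rfl) ?_
  linear_combination h
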